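/- arXiv:1907.04406 — 2 statements merged into one kernel-verified Lean document; each statement's English description precedes it below -/
import Mathlib

section
/- Let n ≥ 1, let 1 ≤ p < ∞, let γ ∈ (0,1) and R > 0, and set r = γR/(2 n^{1/p}). Then the ℓp ball B_p^n(R) can be covered by translates of the ℓ∞ ball B_∞^n(r) using at most (2 + 2/γ)^n · n^{n/p} · Γ(1 + 1/p)^n / Γ(1 + n/p) translates; i.e., there exists a finite set T ⊆ ℝ^n with |T| ≤ (2 + 2/γ)^n · n^{n/p} · Γ(1 + 1/p)^n / Γ(1 + n/p) such that B_p^n(R) ⊆ ⋃_{t ∈ T} (t + B_∞^n(r)). -/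
/-!
Tile `ℝⁿ` by the half-open grid cubes of side `b = 2r`; the centres of the cubes that meet the
ball `B_p^n(R)` cover it by ℓ∞ balls of radius `b / 2 = r`. These cubes are disjoint, and since
an ℓ∞ step of size `b` is an ℓp step of size at most `n^{1/p} b = γR`, they all lie in
`B_p^n((1 + γ)R)`. Comparing volumes, their number is at most
`vol B_p^n((1 + γ)R) / b^n = (2 + 2/γ)^n n^{n/p} Γ(1 + 1/p)^n / Γ(1 + n/p)`.
-/

noncomputable def lpNorm (n : ℕ) (p : ℝ) (x : Fin n → ℝ) : ℝ :=
  (∑ i, |x i| ^ p) ^ (1 / p)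

-- a plain `open MeasureTheory` would make `lpNorm` ambiguous with `MeasureTheory.lpNorm`
open MeasureTheory (volume measureReal_mono measureReal_biUnion_finset)
open Metric

section Grid

variable {ι : Type*} {b : ℝ}

noncomputable def gridIndex (b : ℝ) (x : ι → ℝ) : ι → ℤ := fun i => ⌊x i / b⌋

noncomputable def gridCenter (b : ℝ) (k : ι → ℤ) : ι → ℝ := fun i => b * k i + b / 2

lemma gridIndex_preimage_singleton (hb : 0 < b) (k : ι → ℤ) :
    gridIndex b ⁻¹' {k} = Set.univ.pi fun i => Set.Ico (b * k i) (b * k i + b) := by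
  ext x
  simp only [Set.mem_preimage, Set.mem_singleton_iff, funext_iff, gridIndex, Int.floor_eq_iff,
    le_div_iff₀ hb, div_lt_iff₀ hb, Set.mem_pi, Set.mem_univ, Set.mem_Ico, true_imp_iff]
  exact forall_congr' fun i => by constructor <;> rintro ⟨h₁, h₂⟩ <;> constructor <;> linarith

lemma measurableSet_gridIndex_preimage_singleton [Countable ι] (hb : 0 < b) (k : ι → ℤ) :
    MeasurableSet (gridIndex b ⁻¹' {k}) := by
  rw [gridIndex_preimage_singleton hb]
  exact .univ_pi fun _ => measurableSet_Ico

lemma volume_gridIndex_preimage_singleton [Fintype ι] (hb : 0 < b) (k : ι → ℤ) :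
    volume (gridIndex b ⁻¹' {k}) = ENNReal.ofReal b ^ Fintype.card ι := by
  simp [gridIndex_preimage_singleton hb, MeasureTheory.volume_pi_pi, Real.volume_Ico]

lemma dist_lt_of_gridIndex_eq [Fintype ι] (hb : 0 < b) {x y : ι → ℝ}
    (h : gridIndex b x = gridIndex b y) : dist x y < b := by
  have hx : x ∈ gridIndex b ⁻¹' {gridIndex b y} := h
  have hy : y ∈ gridIndex b ⁻¹' {gridIndex b y} := rfl
  rw [gridIndex_preimage_singleton hb] at hx hy
  refine (dist_pi_lt_iff hb).2 fun i => ?_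
  have hxi := hx i trivial
  have hyi := hy i trivial
  rw [Set.mem_Ico] at hxi hyi
  rw [Real.dist_eq, abs_lt]
  constructor <;> linarith

lemma dist_gridCenter_gridIndex_le [Fintype ι] (hb : 0 < b) (x : ι → ℝ) :
    dist x (gridCenter b (gridIndex b x)) ≤ b / 2 := by
  have hx : x ∈ gridIndex b ⁻¹' {gridIndex b x} := rfl
  rw [gridIndex_preimage_singleton hb] at hx
  refine (dist_pi_le_iff (by positivity)).2 fun i => ?_
  have hxi := hx i trivial
  rw [Set.mem_Ico] at hxi
  rw [Real.dist_eq, abs_le, gridCenter]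
  constructor <;> linarith

lemma finite_image_gridIndex [Fintype ι] {s : Set (ι → ℝ)} (hs : Bornology.IsBounded s)
    (hb : 0 < b) : (gridIndex b '' s).Finite := by
  classical
  obtain ⟨R, hR⟩ := hs.subset_closedBall 0
  refine (Set.finite_Icc (fun _ => ⌊-R / b⌋) (fun _ => ⌊R / b⌋)).subset ?_
  rintro _ ⟨x, hx, rfl⟩
  have hxR (i : ι) : |x i| ≤ R :=
    (norm_le_pi_norm x i).trans (mem_closedBall_zero_iff.1 (hR hx))
  exact ⟨fun i => Int.floor_mono (div_le_div_of_nonneg_right (abs_le.1 (hxR i)).1 hb.le),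
    fun i => Int.floor_mono (div_le_div_of_nonneg_right (abs_le.1 (hxR i)).2 hb.le)⟩

theorem exists_finset_cover_closedBall_card_mul_le_measureReal_thickening [Fintype ι]
    {s : Set (ι → ℝ)} (hs : Bornology.IsBounded s) (hb : 0 < b) :
    ∃ T : Finset (ι → ℝ), (T.card : ℝ) * b ^ Fintype.card ι ≤ volume.real (thickening b s) ∧
      s ⊆ ⋃ t ∈ T, closedBall t (b / 2) := by
  classical
  set S := (finite_image_gridIndex hs hb).toFinset
  refine ⟨S.image (gridCenter b), ?_, fun x hx => ?_⟩
  · have hsub : (⋃ k ∈ S, gridIndex b ⁻¹' {k}) ⊆ thickening b s := by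
      simp only [S, Set.Finite.mem_toFinset, Set.iUnion_subset_iff, Set.forall_mem_image]
      exact fun x hx y hy => mem_thickening_iff.2 ⟨x, hx, dist_lt_of_gridIndex_eq hb hy⟩
    calc ((S.image (gridCenter b)).card : ℝ) * b ^ Fintype.card ι
        ≤ S.card * b ^ Fintype.card ι := by gcongr; exact Finset.card_image_le
      _ = ∑ k ∈ S, volume.real (gridIndex b ⁻¹' {k}) := by
        simp [MeasureTheory.measureReal_def, volume_gridIndex_preimage_singleton hb, hb.le]
      _ = volume.real (⋃ k ∈ S, gridIndex b ⁻¹' {k}) :=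
        (measureReal_biUnion_finset (fun _ _ _ _ hkl => (Set.disjoint_singleton.2 hkl).preimage _)
          (fun k _ => measurableSet_gridIndex_preimage_singleton hb k)
          fun k _ => by simp [volume_gridIndex_preimage_singleton hb]).symm
      _ ≤ volume.real (thickening b s) :=
        measureReal_mono hsub (hs.thickening.measure_lt_top).ne
  · refine Set.mem_biUnion (x := gridCenter b (gridIndex b x)) ?_
      (mem_closedBall.2 (dist_gridCenter_gridIndex_le hb x))
    simpa [S] using ⟨x, hx, rfl⟩

end Grid

section LpNorm

variable {n : ℕ} {p : ℝ}

lemma lpNorm_eq_norm_toLp (hp : 0 < p) (x : Fin n → ℝ) :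
    lpNorm n p x = ‖WithLp.toLp (ENNReal.ofReal p) x‖ := by
  have hp' : (ENNReal.ofReal p).toReal = p := ENNReal.toReal_ofReal hp.le
  simp [lpNorm, PiLp.norm_eq_sum (hp'.symm ▸ hp), hp']

lemma abs_apply_le_lpNorm (hp : 1 ≤ p) (x : Fin n → ℝ) (i : Fin n) : |x i| ≤ lpNorm n p x := by
  have : Fact (1 ≤ ENNReal.ofReal p) := ⟨by simpa using ENNReal.ofReal_le_ofReal hp⟩
  rw [lpNorm_eq_norm_toLp (by linarith)]
  exact PiLp.norm_apply_le (WithLp.toLp (ENNReal.ofReal p) x) i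

lemma isBounded_setOf_lpNorm_le (hp : 1 ≤ p) (R : ℝ) :
    Bornology.IsBounded {x : Fin n → ℝ | lpNorm n p x ≤ R} :=
  isBounded_iff_forall_norm_le.2 ⟨max R 0, fun x hx =>
    (pi_norm_le_iff_of_nonneg (le_max_right R 0)).2
      fun i => ((abs_apply_le_lpNorm hp x i).trans hx).trans (le_max_left R 0)⟩

lemma lpNorm_le_add_mul_dist (hp : 1 ≤ p) (x y : Fin n → ℝ) :
    lpNorm n p x ≤ lpNorm n p y + (n : ℝ) ^ (1 / p) * dist x y := by
  have : Fact (1 ≤ ENNReal.ofReal p) := ⟨by simpa using ENNReal.ofReal_le_ofReal hp⟩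
  have hp' : (1 / ENNReal.ofReal p).toReal = 1 / p := by
    rw [ENNReal.toReal_div, ENNReal.toReal_ofReal (by linarith), ENNReal.toReal_one]
  have hlip := (PiLp.lipschitzWith_toLp (ENNReal.ofReal p) fun _ : Fin n => ℝ).dist_le_mul x y
  simp only [hp', Fintype.card_fin, NNReal.coe_rpow, NNReal.coe_natCast] at hlip
  rw [dist_eq_norm] at hlip
  rw [lpNorm_eq_norm_toLp (by linarith), lpNorm_eq_norm_toLp (by linarith)]
  linarith [norm_le_norm_add_norm_sub' (WithLp.toLp (ENNReal.ofReal p) x)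
    (WithLp.toLp (ENNReal.ofReal p) y)]

lemma thickening_setOf_lpNorm_le_subset (hp : 1 ≤ p) (R δ : ℝ) :
    thickening δ {x | lpNorm n p x ≤ R} ⊆ {x | lpNorm n p x ≤ R + (n : ℝ) ^ (1 / p) * δ} := by
  intro x hx
  obtain ⟨y, hy, hxy⟩ := mem_thickening_iff.1 hx
  have : (n : ℝ) ^ (1 / p) * dist x y ≤ (n : ℝ) ^ (1 / p) * δ := by gcongr
  exact (lpNorm_le_add_mul_dist hp x y).trans (by simp only [Set.mem_ofPred_eq] at hy; linarith)

lemma measureReal_setOf_lpNorm_le (hn : 1 ≤ n) (hp : 1 ≤ p) {R : ℝ} (hR : 0 ≤ R) :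
    volume.real {x : Fin n → ℝ | lpNorm n p x ≤ R} =
      R ^ n * ((2 * Real.Gamma (1 + 1 / p)) ^ n / Real.Gamma (1 + n / p)) := by
  have : Nonempty (Fin n) := Fin.pos_iff_nonempty.1 hn
  have hvol := MeasureTheory.volume_sum_rpow_le (ι := Fin n) hp R
  simp only [Fintype.card_fin] at hvol
  unfold lpNorm
  rw [MeasureTheory.measureReal_def, hvol, ENNReal.toReal_mul, ENNReal.toReal_pow,
    ENNReal.toReal_ofReal hR, ENNReal.toReal_ofReal (by positivity), add_comm (1 : ℝ),
    add_comm (1 : ℝ)]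

end LpNorm

lemma covering_bound_mul_side_pow {n : ℕ} {γ A : ℝ} (hγ : γ ≠ 0) (hA : A ≠ 0) (R G₁ G : ℝ) :
    (2 + 2 / γ) ^ n * A ^ n * G₁ ^ n / G * (γ * R / A) ^ n =
      (R + γ * R) ^ n * ((2 * G₁) ^ n / G) := by
  have hbase : (2 + 2 / γ) * A * G₁ * (γ * R / A) = (R + γ * R) * (2 * G₁) := by
    field_simp; ring
  calc _ = ((2 + 2 / γ) * A * G₁ * (γ * R / A)) ^ n / G := by simp only [mul_pow]; ring
    _ = _ := by rw [hbase]; simp only [mul_pow]; ring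

theorem hypercube_covering_general (n : ℕ) (hn : 1 ≤ n) (p : ℝ) (hp : 1 ≤ p)
    (γ R r : ℝ) (hγ0 : 0 < γ) (hR : 0 < R)
    (hr : r = γ * R / (2 * (n : ℝ) ^ ((1 : ℝ) / p))) :
    ∃ T : Finset (Fin n → ℝ),
      (T.card : ℝ) ≤ (2 + 2 / γ) ^ n * (n : ℝ) ^ ((n : ℝ) / p) *
          (Real.Gamma (1 + 1 / p)) ^ n / Real.Gamma (1 + (n : ℝ) / p) ∧
      {x : Fin n → ℝ | lpNorm n p x ≤ R} ⊆
        ⋃ t ∈ T, {x : Fin n → ℝ | ∀ i, |x i - t i| ≤ r} := by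
  set A := (n : ℝ) ^ (1 / p)
  have hA : 0 < A := Real.rpow_pos_of_pos (by exact_mod_cast hn) _
  have hside : 2 * r = γ * R / A := by rw [hr]; field_simp
  obtain ⟨T, hT, hcover⟩ := exists_finset_cover_closedBall_card_mul_le_measureReal_thickening
    (isBounded_setOf_lpNorm_le hp R) (b := 2 * r) (by rw [hside]; positivity)
  have hcard : (T.card : ℝ) * (γ * R / A) ^ n ≤
      (R + γ * R) ^ n * ((2 * Real.Gamma (1 + 1 / p)) ^ n / Real.Gamma (1 + n / p)) := by
    rw [Fintype.card_fin, hside] at hT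
    refine hT.trans <| (measureReal_mono (thickening_setOf_lpNorm_le_subset hp R _)
      (isBounded_setOf_lpNorm_le hp _).measure_lt_top.ne).trans_eq ?_
    rw [mul_div_cancel₀ _ hA.ne', measureReal_setOf_lpNorm_le hn hp (by positivity)]
  have hA_pow : (n : ℝ) ^ ((n : ℝ) / p) = A ^ n := by
    rw [← Real.rpow_mul_natCast (Nat.cast_nonneg n)]; ring_nf
  refine ⟨T, le_of_mul_le_mul_right ?_ (by positivity : 0 < (γ * R / A) ^ n), fun x hx => ?_⟩
  · rwa [hA_pow, covering_bound_mul_side_pow hγ0.ne' hA.ne']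
  · obtain ⟨t, ht, hxt⟩ := Set.mem_iUnion₂.1 (hcover hx)
    refine Set.mem_biUnion ht fun i => ?_
    rw [← Real.dist_eq]
    exact (dist_le_pi_dist x t i).trans (by simpa using mem_closedBall.1 hxt)

/-- The ℓp ball `B_p^n(R)` of radius `R` can be covered by at most
`(2 + 2/γ)^n · n^{n/p} · Γ(1 + 1/p)^n / Γ(1 + n/p)` translates of the ℓ∞ ball of
radius `r = γR/(2 n^{1/p})`. -/
theorem hypercube_covering (n : ℕ) (hn : 1 ≤ n) (p : ℝ) (hp : 1 ≤ p)
    (γ R r : ℝ) (hγ0 : 0 < γ) (hγ1 : γ < 1) (hR : 0 < R)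
    (hr : r = γ * R / (2 * (n : ℝ) ^ ((1 : ℝ) / p))) :
    ∃ T : Finset (Fin n → ℝ),
      (T.card : ℝ) ≤ (2 + 2 / γ) ^ n * (n : ℝ) ^ ((n : ℝ) / p) *
          (Real.Gamma (1 + 1 / p)) ^ n / Real.Gamma (1 + (n : ℝ) / p) ∧
      {x : Fin n → ℝ | lpNorm n p x ≤ R} ⊆
        ⋃ t ∈ T, {x : Fin n → ℝ | ∀ i, |x i - t i| ≤ r} :=
  hypercube_covering_general n hn p hp γ R r hγ0 hR hr
end

section
/- Let n ≥ 1, 1 ≤ p < ∞, λ > 0, ξ > 1/2, and let u ∈ ℝ^n with ‖u‖_p ≤ λ. Then vol(B_p^n(0, ξλ) ∩ B_p^n(u, ξλ)) ≥ (1/2 − 1/(4ξ))^n · vol(B_p^n(0, ξλ)). In particular, the probability q that a uniformly random point of B_p^n(0, ξλ) lies in B_p^n(0,ξλ) ∩ B_p^n(u,ξλ) satisfies q ≥ 2^{−c_s n} with c_s = −log₂(1/2 − 1/(4ξ)). -/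
/-!
The closed ball of radius `ξλ - ‖u‖/2` around the midpoint `u/2` lies in both balls of radius
`ξλ` around `0` and `u`. A Haar measure scales by the `n`-th power of the radius, so this ball has
`(1 - ‖u‖/(2ξλ))^n ≥ (1/2 - 1/(4ξ))^n` times the volume of `B(0, ξλ)`. The `ℓp` balls are the
preimages of closed balls of the normed space `PiLp p (Fin n → ℝ)`, on which Lebesgue measure
pushes forward to a Haar measure.
-/

open MeasureTheory ENNReal

open Metric Module WithLp

section NormedSpace

variable {E : Type*} [NormedAddCommGroup E] [NormedSpace ℝ E]

theorem closedBall_midpoint_subset_inter (x y : E) (r : ℝ) :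
    closedBall (midpoint ℝ x y) (r - dist x y / 2) ⊆ closedBall x r ∩ closedBall y r := by
  refine Set.subset_inter (closedBall_subset_closedBall' ?_) (closedBall_subset_closedBall' ?_)
  · rw [dist_midpoint_left]; norm_num; linarith
  · rw [dist_midpoint_right]; norm_num; linarith

variable [MeasurableSpace E] [BorelSpace E] [FiniteDimensional ℝ E]
  (μ : Measure E) [μ.IsAddHaarMeasure]

theorem addHaar_closedBall_inter_closedBall {x y : E} {r : ℝ} (hr : 0 < r)
    (hxy : dist x y ≤ 2 * r) :
    ENNReal.ofReal ((1 - dist x y / (2 * r)) ^ finrank ℝ E) * μ (closedBall x r) ≤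
      μ (closedBall x r ∩ closedBall y r) := by
  have hs : 0 ≤ 1 - dist x y / (2 * r) := by
    rw [sub_nonneg, div_le_one (by positivity)]; exact hxy
  calc _ = μ (closedBall (midpoint ℝ x y) ((1 - dist x y / (2 * r)) * r)) := by
        rw [Measure.addHaar_closedBall_mul μ _ hs hr.le, Measure.addHaar_closedBall_center]
    _ = μ (closedBall (midpoint ℝ x y) (r - dist x y / 2)) := by
        congr 2; field_simp
    _ ≤ _ := measure_mono (closedBall_midpoint_subset_inter x y r)

end NormedSpace

section LpBall

variable {n : ℕ} {p : ℝ}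

theorem lpNorm_sub_eq_dist_toLp (hp : 0 < p) (x y : Fin n → ℝ) :
    lpNorm n p (x - y) = dist (toLp (ENNReal.ofReal p) x) (toLp (ENNReal.ofReal p) y) := by
  rw [PiLp.dist_eq_sum (by rwa [ENNReal.toReal_ofReal hp.le]), ENNReal.toReal_ofReal hp.le]
  simp [_root_.lpNorm, Real.dist_eq]

theorem preimage_toLp_closedBall [Fact (1 ≤ ENNReal.ofReal p)] (c : Fin n → ℝ) (r : ℝ) :
    toLp (ENNReal.ofReal p) ⁻¹' closedBall (toLp (ENNReal.ofReal p) c) r =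
      {x | lpNorm n p (x - c) ≤ r} := by
  have hp : 0 < p := by
    have := ENNReal.one_le_ofReal.mp (Fact.out : 1 ≤ ENNReal.ofReal p); linarith
  ext x
  simp [lpNorm_sub_eq_dist_toLp hp]

theorem preimage_toLp_closedBall_zero [Fact (1 ≤ ENNReal.ofReal p)] (r : ℝ) :
    toLp (ENNReal.ofReal p) ⁻¹' closedBall 0 r = {x : Fin n → ℝ | lpNorm n p x ≤ r} := by
  simpa using preimage_toLp_closedBall (n := n) 0 r

theorem finrank_piLp_fin (q : ℝ≥0∞) : finrank ℝ (PiLp q fun _ : Fin n => ℝ) = n := by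
  rw [(WithLp.linearEquiv q ℝ (Fin n → ℝ)).finrank_eq, Module.finrank_fin_fun]

instance isAddHaarMeasure_map_toLp (q : ℝ≥0∞) [Fact (1 ≤ q)] (ι : Type*) [Fintype ι] :
    ((volume : Measure (ι → ℝ)).map (MeasurableEquiv.toLp q (ι → ℝ))).IsAddHaarMeasure := by
  rw [MeasurableEquiv.coe_toLp, ← PiLp.coe_symm_continuousLinearEquiv q ℝ]
  infer_instance

theorem volume_preimage_toLp (q : ℝ≥0∞) (ι : Type*) [Fintype ι]
    (s : Set (PiLp q fun _ : ι => ℝ)) :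
    volume (toLp q ⁻¹' s) = volume.map (MeasurableEquiv.toLp q (ι → ℝ)) s :=
  ((MeasurableEquiv.toLp q (ι → ℝ)).map_apply s).symm

theorem volume_setOf_lpNorm_le_pos (hp : 1 ≤ p) {r : ℝ} (hr : 0 < r) :
    0 < volume {x : Fin n → ℝ | lpNorm n p x ≤ r} := by
  have : Fact (1 ≤ ENNReal.ofReal p) := ⟨ENNReal.one_le_ofReal.mpr hp⟩
  rw [← preimage_toLp_closedBall_zero, volume_preimage_toLp]
  exact measure_closedBall_pos _ _ hr

theorem volume_setOf_lpNorm_le_ne_top (hp : 1 ≤ p) (r : ℝ) :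
    volume {x : Fin n → ℝ | lpNorm n p x ≤ r} ≠ ⊤ := by
  have : Fact (1 ≤ ENNReal.ofReal p) := ⟨ENNReal.one_le_ofReal.mpr hp⟩
  rw [← preimage_toLp_closedBall_zero, volume_preimage_toLp]
  exact measure_closedBall_lt_top.ne

theorem ofReal_mul_volume_le_volume_inter (hp : 1 ≤ p) {r : ℝ} (hr : 0 < r)
    {u : Fin n → ℝ} (hu : lpNorm n p u ≤ 2 * r) :
    ENNReal.ofReal ((1 - lpNorm n p u / (2 * r)) ^ n) * volume {x | lpNorm n p x ≤ r} ≤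
      volume ({x | lpNorm n p x ≤ r} ∩ {x | lpNorm n p (x - u) ≤ r}) := by
  have : Fact (1 ≤ ENNReal.ofReal p) := ⟨ENNReal.one_le_ofReal.mpr hp⟩
  have hdist : dist 0 (toLp (ENNReal.ofReal p) u) = lpNorm n p u := by
    rw [dist_comm, ← toLp_zero, ← lpNorm_sub_eq_dist_toLp (by linarith), sub_zero]
  rw [← preimage_toLp_closedBall_zero, ← preimage_toLp_closedBall, ← Set.preimage_inter,
    volume_preimage_toLp, volume_preimage_toLp, ← hdist]
  simpa only [finrank_piLp_fin] using addHaar_closedBall_inter_closedBall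
    (volume.map (MeasurableEquiv.toLp (ENNReal.ofReal p) (Fin n → ℝ))) hr (hdist ▸ hu)

end LpBall

theorem overlap_volume_general (n : ℕ) (p : ℝ) (hp : 1 ≤ p)
    (lam ξ : ℝ) (hlam : 0 < lam) (hξ : (1 : ℝ) / 2 < ξ)
    (u : Fin n → ℝ) (hu : lpNorm n p u ≤ lam) :
    ENNReal.ofReal ((1 / 2 - 1 / (4 * ξ)) ^ n) *
        volume {x : Fin n → ℝ | lpNorm n p x ≤ ξ * lam} ≤
      volume ({x : Fin n → ℝ | lpNorm n p x ≤ ξ * lam} ∩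
        {x : Fin n → ℝ | lpNorm n p (x - u) ≤ ξ * lam}) ∧
    ENNReal.ofReal ((2 : ℝ) ^ (-(-(Real.logb 2 (1 / 2 - 1 / (4 * ξ)))) * (n : ℝ))) ≤
      volume ({x : Fin n → ℝ | lpNorm n p x ≤ ξ * lam} ∩
          {x : Fin n → ℝ | lpNorm n p (x - u) ≤ ξ * lam}) /
        volume {x : Fin n → ℝ | lpNorm n p x ≤ ξ * lam} := by
  have hξ0 : 0 < ξ := by linarith
  have hR : 0 < ξ * lam := by positivity
  have hbase : 0 < 1 / 2 - 1 / (4 * ξ) := by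
    rw [sub_pos, div_lt_div_iff₀ (by positivity) (by positivity)]; linarith
  have hbase_le : 1 / 2 - 1 / (4 * ξ) ≤ 1 - lpNorm n p u / (2 * (ξ * lam)) := by
    rw [div_sub_div _ _ (by norm_num) (by positivity), one_sub_div (by positivity),
      div_le_div_iff₀ (by positivity) (by positivity)]
    nlinarith [mul_pos hξ0 hlam]
  have hoverlap := (mul_le_mul_left (ENNReal.ofReal_le_ofReal
      (pow_le_pow_left₀ hbase.le hbase_le n)) _).trans
    (ofReal_mul_volume_le_volume_inter hp hR (by nlinarith))
  refine ⟨hoverlap, ?_⟩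
  rwa [neg_neg, Real.rpow_mul zero_le_two, Real.rpow_logb zero_lt_two (by norm_num) hbase,
    Real.rpow_natCast, ENNReal.le_div_iff_mul_le (Or.inl (volume_setOf_lpNorm_le_pos hp hR).ne')
      (Or.inl (volume_setOf_lpNorm_le_ne_top hp _))]

/-- Overlap lemma: `vol(B_p^n(0,ξλ) ∩ B_p^n(u,ξλ)) ≥ (1/2 - 1/(4ξ))^n · vol(B_p^n(0,ξλ))`;
in particular the probability `q` that a uniform point of `B_p^n(0,ξλ)` lands in the
overlap satisfies `q ≥ 2^{-c_s n}` with `c_s = -log₂(1/2 - 1/(4ξ))`. -/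
theorem overlap_volume (n : ℕ) (hn : 1 ≤ n) (p : ℝ) (hp : 1 ≤ p)
    (lam ξ : ℝ) (hlam : 0 < lam) (hξ : (1 : ℝ) / 2 < ξ)
    (u : Fin n → ℝ) (hu : lpNorm n p u ≤ lam) :
    ENNReal.ofReal ((1 / 2 - 1 / (4 * ξ)) ^ n) *
        volume {x : Fin n → ℝ | lpNorm n p x ≤ ξ * lam} ≤
      volume ({x : Fin n → ℝ | lpNorm n p x ≤ ξ * lam} ∩
        {x : Fin n → ℝ | lpNorm n p (x - u) ≤ ξ * lam}) ∧
    ENNReal.ofReal ((2 : ℝ) ^ (-(-(Real.logb 2 (1 / 2 - 1 / (4 * ξ)))) * (n : ℝ))) ≤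
      volume ({x : Fin n → ℝ | lpNorm n p x ≤ ξ * lam} ∩
          {x : Fin n → ℝ | lpNorm n p (x - u) ≤ ξ * lam}) /
        volume {x : Fin n → ℝ | lpNorm n p x ≤ ξ * lam} :=
  overlap_volume_general n p hp lam ξ hlam hξ u hu
end
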